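/- Fix a > 0 and m, η₀ ∈ ℝ; set G(η) = a(m + η) and G₀ = G(η₀), and define H(η) = Φ(G₀) log Φ(G(η)) + (1 − Φ(G₀)) log(1 − Φ(G(η))) for η ∈ ℝ. Then H is differentiable on ℝ with H'(η) = a Λ(G(η)) (Φ(G₀) − Φ(G(η))), where Λ(t) = φ(t)/(Φ(t)(1 − Φ(t))); moreover η₀ is the unique zero of H' and H attains a strict global maximum on ℝ at η = η₀ (H(η) < H(η₀) for all η ≠ η₀). -/

import Mathlib

/-!
With `p = Φ(G₀)` and `q = Φ(G(η))`, `H(η) = p log q + (1 - p) log (1 - q)` is an expected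
Bernoulli log-likelihood. By Gibbs' inequality (`log x < x - 1` for `x ≠ 1`) it is strictly
maximised at `q = p`, and `η ↦ Φ(a(m + η))` is injective, so `η₀` is the strict maximiser.
-/

open MeasureTheory ProbabilityTheory

/-- The standard normal density. -/
noncomputable def stdNormalPDF (t : ℝ) : ℝ := gaussianPDFReal 0 1 t

/-- The standard normal cumulative distribution function. -/
noncomputable def stdNormalCDF (x : ℝ) : ℝ := ∫ t in Set.Iic x, gaussianPDFReal 0 1 t

/-- `Λ(t) = φ(t)/(Φ(t)(1 − Φ(t)))`. -/
noncomputable def stdLambda (t : ℝ) : ℝ := stdNormalPDF t / (stdNormalCDF t * (1 - stdNormalCDF t))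

open Real Set

theorem hasDerivAt_setIntegral_Iic {E : Type*} [NormedAddCommGroup E] [NormedSpace ℝ E]
    [CompleteSpace E] {f : ℝ → E} (hf : Integrable f) (hc : Continuous f) (x : ℝ) :
    HasDerivAt (fun y => ∫ t in Iic y, f t) (f x) x := by
  have hFTC : HasDerivAt (fun y => (∫ t in Iic 0, f t) + ∫ t in (0 : ℝ)..y, f t) (f x) x :=
    (intervalIntegral.integral_hasDerivAt_right hf.intervalIntegrable
      (hc.stronglyMeasurableAtFilter _ _) hc.continuousAt).const_add _
  refine hFTC.congr_of_eventuallyEq (Filter.Eventually.of_forall fun y => ?_)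
  dsimp only
  rw [← intervalIntegral.integral_Iic_sub_Iic hf.integrableOn hf.integrableOn, add_sub_cancel]

theorem setIntegral_pos_of_forall_pos {α : Type*} [MeasurableSpace α] {μ : Measure α}
    {f : α → ℝ} (hf : Integrable f μ) (hpos : ∀ t, 0 < f t) {s : Set α} (hs : 0 < μ s) :
    0 < ∫ t in s, f t ∂μ := by
  have hsupp : Function.support f = univ := by
    ext t; simpa using (hpos t).ne'
  rwa [setIntegral_pos_iff_support_of_nonneg_ae
    (Filter.Eventually.of_forall fun t => (hpos t).le) hf.integrableOn, hsupp, univ_inter]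

theorem stdNormalPDF_pos (t : ℝ) : 0 < stdNormalPDF t := gaussianPDFReal_pos 0 1 t one_ne_zero

theorem integrable_stdNormalPDF : Integrable stdNormalPDF := integrable_gaussianPDFReal 0 1

theorem continuous_stdNormalPDF : Continuous stdNormalPDF := by
  unfold stdNormalPDF gaussianPDFReal
  fun_prop

theorem hasDerivAt_stdNormalCDF (x : ℝ) : HasDerivAt stdNormalCDF (stdNormalPDF x) x :=
  hasDerivAt_setIntegral_Iic integrable_stdNormalPDF continuous_stdNormalPDF x

theorem one_sub_stdNormalCDF (x : ℝ) : 1 - stdNormalCDF x = ∫ t in Ioi x, stdNormalPDF t := by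
  unfold stdNormalCDF stdNormalPDF
  rw [← integral_gaussianPDFReal_eq_one 0 one_ne_zero,
    ← intervalIntegral.integral_Iic_add_Ioi (integrable_gaussianPDFReal 0 1).integrableOn
      (integrable_gaussianPDFReal 0 1).integrableOn]
  ring

theorem stdNormalCDF_pos (x : ℝ) : 0 < stdNormalCDF x :=
  setIntegral_pos_of_forall_pos integrable_stdNormalPDF stdNormalPDF_pos (by simp)

theorem stdNormalCDF_lt_one (x : ℝ) : stdNormalCDF x < 1 := by
  have h := setIntegral_pos_of_forall_pos integrable_stdNormalPDF stdNormalPDF_pos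
    (s := Ioi x) (by simp)
  rw [← one_sub_stdNormalCDF] at h
  linarith

theorem strictMono_stdNormalCDF : StrictMono stdNormalCDF :=
  strictMono_of_deriv_pos fun x => (hasDerivAt_stdNormalCDF x).deriv ▸ stdNormalPDF_pos x

theorem stdLambda_pos (t : ℝ) : 0 < stdLambda t :=
  div_pos (stdNormalPDF_pos t)
    (mul_pos (stdNormalCDF_pos t) (sub_pos.2 (stdNormalCDF_lt_one t)))

theorem HasDerivAt.bernoulli_logLikelihood {f : ℝ → ℝ} {f' x : ℝ} (hf : HasDerivAt f f' x)
    (h0 : 0 < f x) (h1 : f x < 1) (p : ℝ) :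
    HasDerivAt (fun y => p * Real.log (f y) + (1 - p) * Real.log (1 - f y))
      (f' * (p - f x) / (f x * (1 - f x))) x := by
  refine (((hf.log h0.ne').const_mul p).add
    (((hf.const_sub 1).log (sub_pos.2 h1).ne').const_mul (1 - p))).congr_deriv ?_
  field_simp [h0.ne', (sub_pos.2 h1).ne']
  ring

theorem bernoulli_logLikelihood_lt {p q : ℝ} (hp0 : 0 < p) (hp1 : p < 1) (hq0 : 0 < q)
    (hq1 : q < 1) (hqp : q ≠ p) :
    p * log q + (1 - p) * log (1 - q) < p * log p + (1 - p) * log (1 - p) := by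
  have hp1' : 0 < 1 - p := sub_pos.2 hp1
  have hq1' : 0 < 1 - q := sub_pos.2 hq1
  have hfirst : p * (log q - log p) < q - p := by
    rw [← log_div hq0.ne' hp0.ne']
    calc p * log (q / p) < p * (q / p - 1) :=
          mul_lt_mul_of_pos_left (log_lt_sub_one_of_pos (div_pos hq0 hp0)
            (fun h => hqp ((div_eq_one_iff_eq hp0.ne').1 h))) hp0
      _ = q - p := by field_simp
  have hsecond : (1 - p) * (log (1 - q) - log (1 - p)) ≤ p - q := by
    rw [← log_div hq1'.ne' hp1'.ne']
    calc (1 - p) * log ((1 - q) / (1 - p)) ≤ (1 - p) * ((1 - q) / (1 - p) - 1) :=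
          mul_le_mul_of_nonneg_left (log_le_sub_one_of_pos (div_pos hq1' hp1')) hp1'.le
      _ = p - q := by field_simp; ring
  linarith

/-- The population probit criterion
`H(η) = Φ(G₀) log Φ(G(η)) + (1 − Φ(G₀)) log(1 − Φ(G(η)))`, `G(η) = a(m+η)`, `G₀ = G(η₀)`,
is differentiable with `H'(η) = a Λ(G(η))(Φ(G₀) − Φ(G(η)))`; `η₀` is the unique zero of `H'`
and `H` has a strict global maximum at `η₀`. -/
theorem stmt13 (a : ℝ) (ha : 0 < a) (m η₀ : ℝ)
    (G : ℝ → ℝ) (hG : ∀ η, G η = a * (m + η))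
    (H : ℝ → ℝ)
    (hH : ∀ η, H η = stdNormalCDF (G η₀) * Real.log (stdNormalCDF (G η)) +
      (1 - stdNormalCDF (G η₀)) * Real.log (1 - stdNormalCDF (G η))) :
    (∀ η, HasDerivAt H (a * stdLambda (G η) * (stdNormalCDF (G η₀) - stdNormalCDF (G η))) η) ∧
    (∀ η, a * stdLambda (G η) * (stdNormalCDF (G η₀) - stdNormalCDF (G η)) = 0 ↔ η = η₀) ∧
    (∀ η, η ≠ η₀ → H η < H η₀) := by
  have hΦG_inj : Function.Injective (stdNormalCDF ∘ G) :=
    strictMono_stdNormalCDF.injective.comp fun x y h => by simpa [hG, ha.ne'] using h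
  refine ⟨fun η => ?_, fun η => ?_, fun η hη => ?_⟩
  · have hG' : HasDerivAt G a η := by
      rw [show G = fun η => a * (m + η) from funext hG]
      simpa using ((hasDerivAt_id η).const_add m).const_mul a
    rw [show H = _ from funext hH]
    refine (HasDerivAt.bernoulli_logLikelihood ((hasDerivAt_stdNormalCDF _).comp η hG')
      (stdNormalCDF_pos _) (stdNormalCDF_lt_one _) _).congr_deriv ?_
    simp only [Function.comp_apply, stdLambda]
    ring
  · have hΦG_eq : stdNormalCDF (G η₀) = stdNormalCDF (G η) ↔ η₀ = η := hΦG_inj.eq_iff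
    rw [mul_eq_zero, mul_eq_zero, sub_eq_zero, hΦG_eq, eq_comm (a := η)]
    simp [ha.ne', (stdLambda_pos _).ne']
  · rw [hH, hH]
    exact bernoulli_logLikelihood_lt (stdNormalCDF_pos _) (stdNormalCDF_lt_one _)
      (stdNormalCDF_pos _) (stdNormalCDF_lt_one _) (hΦG_inj.ne hη)
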